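/- arXiv:1310.1685 — 9 statements merged into one kernel-verified Lean document; each statement's English description precedes it below -/
import Mathlib

section
/- For all odd integers a, b with 1 ≤ b and 5b ≤ a, and every real number r with 0 < r ≤ 2, one has (3 + 1/r)^b < (1 + 1/(2r))^(a+b). -/
/-! With `x = 1/(2r) ≥ 1/4` we have `3 + 1/r = 3 + 2x < (1 + x)^6`, already visible in the binomial
expansion up to `x^3`. Raising to the `b`-th power and using `6b ≤ a + b` with `1 ≤ 1 + x` gives the claim. -/

theorem pow_lt_pow_of_lt_pow_mul {R : Type*} [Semiring R] [PartialOrder R] [IsStrictOrderedRing R]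
    {c y : R} {k b n : ℕ} (hc : 0 ≤ c) (hcy : c < y ^ k) (hy : 1 ≤ y) (hb : b ≠ 0)
    (hn : k * b ≤ n) : c ^ b < y ^ n :=
  calc c ^ b < (y ^ k) ^ b := pow_lt_pow_left₀ hcy hc hb
    _ = y ^ (k * b) := (pow_mul y k b).symm
    _ ≤ y ^ n := pow_le_pow_right₀ hy hn

theorem three_add_two_mul_lt_one_add_pow_six {x : ℝ} (hx : 1 / 4 ≤ x) :
    3 + 2 * x < (1 + x) ^ 6 := by
  have hx0 : 0 ≤ x := by linarith
  have hcubic : 3 + 2 * x < 1 + 6 * x + 15 * x ^ 2 + 20 * x ^ 3 := by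
    nlinarith [mul_nonneg hx0 hx0, mul_nonneg (mul_nonneg hx0 hx0) hx0]
  have htail : 0 ≤ 15 * x ^ 4 + 6 * x ^ 5 + x ^ 6 := by positivity
  calc 3 + 2 * x < 1 + 6 * x + 15 * x ^ 2 + 20 * x ^ 3 := hcubic
    _ ≤ (1 + x) ^ 6 := by nlinarith [htail]

theorem stmt_1_general (a b : ℕ) (hb1 : 1 ≤ b) (hab : 5*b ≤ a)
    (r : ℝ) (hr0 : 0 < r) (hr2 : r ≤ 2) :
    (3 + 1/r)^b < (1 + 1/(2*r))^(a+b) := by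
  have hx : 1 / 4 ≤ 1 / (2 * r) := one_div_le_one_div_of_le (by positivity) (by linarith)
  have hr : 1 / r = 2 * (1 / (2 * r)) := by field_simp
  rw [hr]
  exact pow_lt_pow_of_lt_pow_mul (by positivity) (three_add_two_mul_lt_one_add_pow_six hx)
    (by linarith) (by omega) (by omega)

theorem stmt_1 (a b : ℕ) (ha : Odd a) (hb : Odd b) (hb1 : 1 ≤ b) (hab : 5*b ≤ a)
    (r : ℝ) (hr0 : 0 < r) (hr2 : r ≤ 2) :
    (3 + 1/r)^b < (1 + 1/(2*r))^(a+b) :=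
  stmt_1_general a b hb1 hab r hr0 hr2
end

section
/- For any real r ≥ 2 and odd positive integers a, b with 3br ≤ a, one has (3 + 1/r)^b < (1 + 1/(2r))^(a+b). -/
theorem stmt_2 (a b : ℕ) (ha : Odd a) (hb : Odd b) (ha0 : 0 < a) (hb0 : 0 < b)
    (r : ℝ) (hr : 2 ≤ r) (hbra : 3 * (b:ℝ) * r ≤ (a:ℝ)) :
    (3 + 1/r)^b < (1 + 1/(2*r))^(a+b) := by
  have hr0 : (0:ℝ) < r := by linarith
  have hx0 : (0:ℝ) < 1/(2*r) := by positivity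
  have hx1 : (1:ℝ) ≤ 1 + 1/(2*r) := by linarith
  -- Bernoulli: (1 + 1/(2r))^r ≥ 1 + r/(2r) = 3/2
  have hbern : (3/2 : ℝ) ≤ (1 + 1/(2*r)) ^ (r:ℝ) := by
    have := one_add_mul_self_le_rpow_one_add (by linarith : (-1:ℝ) ≤ 1/(2*r))
      (by linarith : (1:ℝ) ≤ r)
    have h1 : 1 + r * (1/(2*r)) = 3/2 := by field_simp; ring
    linarith [h1 ▸ this]
  -- key: 3 + 1/r < (1 + 1/(2r))^(3r+1)
  have hkey : 3 + 1/r < (1 + 1/(2*r)) ^ ((3*r+1:ℝ)) := by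
    have h3r : (1 + 1/(2*r)) ^ ((3*r:ℝ)) = ((1 + 1/(2*r)) ^ (r:ℝ))^(3:ℕ) := by
      rw [← Real.rpow_natCast ((1 + 1/(2*r)) ^ (r:ℝ)) 3, ← Real.rpow_mul (by linarith)]
      norm_num; ring_nf
    have h27 : (27/8 : ℝ) ≤ (1 + 1/(2*r)) ^ ((3*r:ℝ)) := by
      rw [h3r]
      calc (27/8 : ℝ) = (3/2)^(3:ℕ) := by norm_num
        _ ≤ ((1 + 1/(2*r)) ^ (r:ℝ))^(3:ℕ) := by
            apply pow_le_pow_left₀ (by norm_num) hbern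
    have hsplit : (1 + 1/(2*r)) ^ ((3*r+1:ℝ)) =
        (1 + 1/(2*r)) ^ ((3*r:ℝ)) * (1 + 1/(2*r)) := by
      rw [Real.rpow_add (by linarith), Real.rpow_one]
    rw [hsplit]
    have : (27/8:ℝ) * (1 + 1/(2*r)) ≤ (1 + 1/(2*r)) ^ ((3*r:ℝ)) * (1 + 1/(2*r)) := by
      apply mul_le_mul_of_nonneg_right h27 (by linarith)
    have hlt : 3 + 1/r < (27/8:ℝ) * (1 + 1/(2*r)) := by
      have : (27/8:ℝ) * (1 + 1/(2*r)) = 27/8 + 27/(16*r) := by field_simp; ring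
      rw [this]
      have h1 : 1/r ≤ 27/(16*r) := by
        rw [div_le_div_iff₀ hr0 (by positivity)]; linarith
      linarith
    linarith
  have hb1 : b ≠ 0 := hb0.ne'
  -- (3+1/r)^b < ((1+1/(2r))^(3r+1))^b
  have step1 : (3 + 1/r)^b < ((1 + 1/(2*r)) ^ ((3*r+1:ℝ)))^b := by
    apply pow_lt_pow_left₀ hkey (by positivity) hb1
  -- ((1+1/(2r))^(3r+1))^b = (1+1/(2r))^((3r+1)*b)
  have step2 : ((1 + 1/(2*r)) ^ ((3*r+1:ℝ)))^b = (1 + 1/(2*r)) ^ (((3*r+1)*b : ℝ)) := by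
    rw [← Real.rpow_natCast ((1 + 1/(2*r)) ^ ((3*r+1:ℝ))) b, ← Real.rpow_mul (by linarith)]
  have step3 : (1 + 1/(2*r)) ^ (((3*r+1)*b : ℝ)) ≤ (1 + 1/(2*r)) ^ (((a:ℝ)+b)) := by
    apply Real.rpow_le_rpow_of_exponent_le hx1
    have : (3*r+1)*(b:ℝ) = 3*b*r + b := by ring
    rw [this]; linarith
  have step4 : (1 + 1/(2*r)) ^ (((a:ℝ)+b)) = (1 + 1/(2*r))^(a+b) := by
    rw [← Real.rpow_natCast (1 + 1/(2*r)) (a+b)]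
    norm_num
  calc (3 + 1/r)^b < ((1 + 1/(2*r)) ^ ((3*r+1:ℝ)))^b := step1
    _ = (1 + 1/(2*r)) ^ (((3*r+1)*b : ℝ)) := step2
    _ ≤ (1 + 1/(2*r)) ^ (((a:ℝ)+b)) := step3
    _ = (1 + 1/(2*r))^(a+b) := step4
end

section
/- If r is a real number with 0 < {r} denoting its fractional part, and b ≥ 1 an integer, then the limit as n → ∞ (over integers n with rn ∈ ℤ) of ((2n)!^{2b{r}} / (2{r}n)!^{2b})^{1/n} equals {r}^{-4b{r}}, where for {r}=0 the right-hand side is interpreted as 1. -/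
/-!
By Stirling, `log m! = m log m - m + o(m)`. When `r n ∈ ℤ` the number `2{r}n` is a natural
number, so both factorials have arguments `c n` with `c = 2` and `c = 2{r}`, and
`log (c n)! / n = c log n + c log c - c + o(1)`. In `(1/n) log` of the quotient the `log n`
terms cancel because the exponents are `2b{r}` and `2b`, and what is left is
`2b{r} (2 log 2 - 2) - 2b (2{r} log (2{r}) - 2{r}) = -4b{r} log {r}`.
-/

open Filter Real Topology
open scoped Nat

lemma log_factorial_sub_eq_log_stirlingSeq {m : ℕ} (hm : m ≠ 0) :
    log m ! - (m * log m - m) = log (Stirling.stirlingSeq m) + log (2 * m) / 2 := by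
  rw [Stirling.log_stirlingSeq_formula, log_div (by positivity) (exp_ne_zero 1), log_exp]
  ring

lemma tendsto_log_factorial_sub_div_atTop :
    Tendsto (fun m : ℕ => (log m ! - (m * log m - m)) / m) atTop (𝓝 0) := by
  have hm : Tendsto (fun m : ℕ => (m : ℝ)) atTop atTop := tendsto_natCast_atTop_atTop
  have hstirling : Tendsto (fun m : ℕ => log (Stirling.stirlingSeq m) / m) atTop (𝓝 0) :=
    ((continuousAt_log (by positivity)).tendsto.comp
      Stirling.tendsto_stirlingSeq_sqrt_pi).div_atTop hm
  have hlog : Tendsto (fun m : ℕ => log m / m) atTop (𝓝 0) :=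
    isLittleO_log_id_atTop.tendsto_div_nhds_zero.comp hm
  have hconst : Tendsto (fun m : ℕ => log 2 / m) atTop (𝓝 0) :=
    tendsto_const_nhds.div_atTop hm
  have hsum := hstirling.add ((hconst.add hlog).div_const 2)
  rw [add_zero, zero_div, add_zero] at hsum
  refine hsum.congr' ?_
  filter_upwards [eventually_ne_atTop 0] with m hm0
  rw [log_factorial_sub_eq_log_stirlingSeq hm0, log_mul two_ne_zero (by positivity)]
  ring

lemma tendsto_log_factorial_div_sub_mul_log {α : Type*} {l : Filter α} {k : α → ℕ} {x : α → ℝ}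
    {c : ℝ} (hc : 0 < c) (hx : Tendsto x l atTop) (hk : ∀ᶠ a in l, (k a : ℝ) = c * x a) :
    Tendsto (fun a => log (k a)! / x a - c * log (x a)) l (𝓝 (c * log c - c)) := by
  have hk_top : Tendsto k l atTop := by
    rw [← tendsto_natCast_atTop_iff (R := ℝ)]
    exact (hx.const_mul_atTop hc).congr' (hk.mono fun _ h => h.symm)
  have herr := (tendsto_log_factorial_sub_div_atTop.comp hk_top).const_mul c
  rw [mul_zero] at herr
  have hlim := herr.add_const (c * log c - c)
  rw [zero_add] at hlim
  refine hlim.congr' ?_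
  filter_upwards [hk, hx.eventually_gt_atTop 0] with a hka hxa
  simp only [Function.comp_apply]
  rw [hka, log_mul hc.ne' hxa.ne']
  field_simp
  ring

lemma natCast_floor_two_mul_fract_mul {r : ℝ} {n : ℕ} (h : ∃ m : ℤ, r * n = m) :
    (⌊2 * Int.fract r * n⌋₊ : ℝ) = 2 * Int.fract r * n := by
  obtain ⟨m, hm⟩ := h
  have hint : 2 * Int.fract r * n = ((2 * (m - ⌊r⌋ * n) : ℤ) : ℝ) := by
    push_cast
    rw [Int.fract, ← hm]
    ring
  rw [natCast_floor_eq_intCast_floor (by positivity), hint, Int.floor_intCast]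

theorem stmt_3_general (r : ℝ) (hr : 0 < Int.fract r) (b : ℕ) :
    Tendsto
      (fun n : ℕ =>
        (((2*n).factorial : ℝ) ^ (2*(b:ℝ)*Int.fract r) /
          ((Nat.floor (2 * Int.fract r * n)).factorial : ℝ) ^ (2*b)) ^ ((1:ℝ)/(n:ℝ)))
      (atTop ⊓ 𝓟 {n : ℕ | ∃ m : ℤ, r * n = (m:ℝ)})
      (nhds (Int.fract r ^ (-(4*(b:ℝ)*Int.fract r)))) := by
  have hn : Tendsto (fun n : ℕ => (n : ℝ)) (atTop ⊓ 𝓟 {n : ℕ | ∃ m : ℤ, r * n = (m:ℝ)}) atTop :=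
    tendsto_natCast_atTop_atTop.mono_left inf_le_left
  have h2n := tendsto_log_factorial_div_sub_mul_log (k := fun n : ℕ => 2 * n) two_pos hn
    (.of_forall fun n => by push_cast; ring)
  have hk := tendsto_log_factorial_div_sub_mul_log (k := fun n : ℕ => ⌊2 * Int.fract r * n⌋₊)
    (mul_pos two_pos hr) hn
    (eventually_inf_principal.2 (.of_forall fun _ => natCast_floor_two_mul_fract_mul))
  have hlog := (h2n.const_mul (2 * b * Int.fract r)).sub (hk.const_mul (2 * (b : ℝ)))
  rw [rpow_def_of_pos hr]
  convert hlog.rexp using 1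
  · funext n
    rw [rpow_def_of_pos (by positivity), log_div (by positivity) (by positivity),
      log_rpow (by positivity), log_pow]
    congr 1
    push_cast
    ring
  · rw [log_mul two_ne_zero hr.ne']
    congr 2
    ring

theorem stmt_3 (r : ℝ) (hr : 0 < Int.fract r) (b : ℕ) (hb : 1 ≤ b) :
    Tendsto
      (fun n : ℕ =>
        (((2*n).factorial : ℝ) ^ (2*(b:ℝ)*Int.fract r) /
          ((Nat.floor (2 * Int.fract r * n)).factorial : ℝ) ^ (2*b)) ^ ((1:ℝ)/(n:ℝ)))
      (atTop ⊓ 𝓟 {n : ℕ | ∃ m : ℤ, r * n = (m:ℝ)})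
      (nhds (Int.fract r ^ (-(4*(b:ℝ)*Int.fract r)))) :=
  stmt_3_general r hr b
end

section
/- For every odd integer β ≥ 1 there exists a polynomial V_β(X) ∈ ℚ[X] of degree at most β such that sin^β(z)·cot_β(z) = V_β(cos z) for all z, where cot_β(z) = ((-1)^{β-1}/(β-1)!)·d^{β-1}/dz^{β-1}(cot z), and moreover V_β(-X) = -V_β(X) and V_β(1) = 1. -/
/-!
Write `c = cos z`, `s = sin z`. Since `s² = 1 - c²`, the derivative of `P(c) / s^k` has the same
shape: it is `(-(1 - c²) P'(c) - k c P(c)) / s^(k+1)`. Starting from `cot = c / s` this gives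
`cot^(n) = Q_n(c) / s^(n+1)` for recursively defined `Q_n ∈ ℚ[X]`, and induction on the
recursion shows `deg Q_n ≤ n + 1`, `Q_n(-X) = (-1)^(n+1) Q_n` and `Q_n(1) = (-1)^n n!`.
`V_β` is `Q_(β-1)` rescaled by `(-1)^(β-1) / (β-1)!`.
-/

open Real Polynomial

/-- `cotIter β z` is `cot_β(z) = ((-1)^(β-1)/(β-1)!) · d^{β-1}/dz^{β-1} (cot z)`. -/
noncomputable def cotIter (β : ℕ) (z : ℝ) : ℝ :=
  ((-1:ℝ)^(β-1) / (β-1).factorial) *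
    iteratedDeriv (β-1) (fun t => Real.cos t / Real.sin t) z

noncomputable def cotDerivPoly : ℕ → ℚ[X]
  | 0 => X
  | n + 1 =>
    -((1 - X ^ 2) * derivative (cotDerivPoly n)) - C ((n + 1 : ℕ) : ℚ) * X * cotDerivPoly n

theorem natDegree_cotDerivPoly_le (n : ℕ) : (cotDerivPoly n).natDegree ≤ n + 1 := by
  induction n with
  | zero => simp [cotDerivPoly]
  | succ n ih =>
    have hderiv : (derivative (cotDerivPoly n)).natDegree ≤ n := by
      have := natDegree_derivative_le (cotDerivPoly n)
      omega
    rw [cotDerivPoly]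
    compute_degree
    all_goals omega

theorem cotDerivPoly_comp_neg_X (n : ℕ) :
    (cotDerivPoly n).comp (-X) = (-1) ^ (n + 1) * cotDerivPoly n := by
  induction n with
  | zero => simp [cotDerivPoly]
  | succ n ih =>
    have hderiv : (derivative (cotDerivPoly n)).comp (-X) =
        (-1) ^ n * derivative (cotDerivPoly n) := by
      have h := congrArg derivative ih
      simp only [derivative_comp, derivative_mul, derivative_pow, derivative_neg, derivative_one,
        derivative_X, neg_zero, mul_zero, zero_mul, zero_add] at h
      linear_combination -h
    simp only [cotDerivPoly, sub_comp, neg_comp, mul_comp, hderiv, ih, one_comp, pow_comp, X_comp,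
      C_comp]
    ring

theorem cotDerivPoly_eval_one (n : ℕ) : (cotDerivPoly n).eval 1 = (-1) ^ n * n.factorial := by
  induction n with
  | zero => simp [cotDerivPoly]
  | succ n ih =>
    simp only [cotDerivPoly, Nat.cast_add, Nat.cast_one, map_add, map_natCast, map_one, eval_sub,
      eval_neg, eval_mul, eval_one, eval_pow, eval_X, one_pow, sub_self, zero_mul, neg_zero,
      eval_add, eval_natCast, mul_one, ih, zero_sub, Nat.factorial_succ, Nat.cast_mul]
    ring

theorem hasDerivAt_aeval_cos_div_sin_pow (P : ℚ[X]) (k : ℕ) {z : ℝ} (hz : sin z ≠ 0) :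
    HasDerivAt (fun t => aeval (cos t) P / sin t ^ k)
      (aeval (cos z) (-((1 - X ^ 2) * derivative P) - C (k : ℚ) * X * P) / sin z ^ (k + 1))
      z := by
  have hnum : HasDerivAt (fun t => aeval (cos t) P) (aeval (cos z) (derivative P) * -sin z) z :=
    (P.hasDerivAt_aeval (cos z)).comp z (hasDerivAt_cos z)
  have hden : HasDerivAt (fun t => sin t ^ k) (k * sin z ^ (k - 1) * cos z) z :=
    (hasDerivAt_sin z).pow k
  refine (hnum.div hden (pow_ne_zero k hz)).congr_deriv ?_
  simp only [map_sub, map_neg, map_mul, map_one, map_pow, aeval_X, aeval_C, eq_ratCast,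
    Rat.cast_natCast, ← sin_sq]
  rcases k with _ | k
  · simp only [CharP.cast_eq_zero, mul_zero, zero_mul, sub_zero, pow_zero, zero_add, pow_one]
    field_simp
  · simp only [add_tsub_cancel_right]
    field_simp
    ring

theorem iteratedDeriv_cot (n : ℕ) {z : ℝ} (hz : sin z ≠ 0) :
    iteratedDeriv n (fun t => cos t / sin t) z =
      aeval (cos z) (cotDerivPoly n) / sin z ^ (n + 1) := by
  induction n generalizing z with
  | zero => simp [cotDerivPoly]
  | succ n ih =>
    have hsin_ne : {w : ℝ | sin w ≠ 0} ∈ nhds z :=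
      (isOpen_ne.preimage continuous_sin).mem_nhds hz
    have heq : iteratedDeriv n (fun t => cos t / sin t) =ᶠ[nhds z]
        fun t => aeval (cos t) (cotDerivPoly n) / sin t ^ (n + 1) :=
      Filter.eventuallyEq_of_mem hsin_ne fun w hw => ih hw
    rw [iteratedDeriv_succ, heq.deriv_eq]
    exact (hasDerivAt_aeval_cos_div_sin_pow _ _ hz).deriv

/-- `cotIterPoly n` is the paper's `V_{n+1}`. -/
noncomputable def cotIterPoly (n : ℕ) : ℚ[X] :=
  C ((-1 : ℚ) ^ n / n.factorial) * cotDerivPoly n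

theorem sin_pow_mul_cotIter (n : ℕ) {z : ℝ} (hz : sin z ≠ 0) :
    sin z ^ (n + 1) * cotIter (n + 1) z = aeval (cos z) (cotIterPoly n) := by
  rw [cotIter, add_tsub_cancel_right, iteratedDeriv_cot n hz, cotIterPoly, map_mul, aeval_C]
  simp only [eq_ratCast, Rat.cast_div, Rat.cast_pow, Rat.cast_neg, Rat.cast_one, Rat.cast_natCast]
  field_simp

theorem natDegree_cotIterPoly_le (n : ℕ) : (cotIterPoly n).natDegree ≤ n + 1 :=
  natDegree_C_mul_le _ _ |>.trans (natDegree_cotDerivPoly_le n)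

theorem cotIterPoly_comp_neg_X (n : ℕ) :
    (cotIterPoly n).comp (-X) = (-1) ^ (n + 1) * cotIterPoly n := by
  rw [cotIterPoly, mul_comp, C_comp, cotDerivPoly_comp_neg_X]
  ring

theorem cotIterPoly_eval_one (n : ℕ) : (cotIterPoly n).eval 1 = 1 := by
  rw [cotIterPoly, eval_mul, eval_C, cotDerivPoly_eval_one]
  field_simp
  rw [← pow_mul, mul_comm, (even_two_mul n).neg_one_pow]

theorem stmt_4_general (β : ℕ) (hβ : Odd β) :
    ∃ V : Polynomial ℚ, V.degree ≤ (β : ℕ) ∧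
      (∀ z : ℝ, Real.sin z ≠ 0 →
        Real.sin z ^ β * cotIter β z = Polynomial.aeval (Real.cos z) V) ∧
      V.comp (-Polynomial.X) = -V ∧ V.eval 1 = 1 := by
  obtain ⟨m, rfl⟩ := hβ
  refine ⟨cotIterPoly (2 * m), degree_le_of_natDegree_le (natDegree_cotIterPoly_le _),
    fun z hz => sin_pow_mul_cotIter _ hz, ?_, cotIterPoly_eval_one _⟩
  rw [cotIterPoly_comp_neg_X, (odd_two_mul_add_one m).neg_one_pow, neg_one_mul]

theorem stmt_4 (β : ℕ) (hβ : Odd β) (hβ1 : 1 ≤ β) :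
    ∃ V : Polynomial ℚ, V.degree ≤ (β : ℕ) ∧
      (∀ z : ℝ, Real.sin z ≠ 0 →
        Real.sin z ^ β * cotIter β z = Polynomial.aeval (Real.cos z) V) ∧
      V.comp (-Polynomial.X) = -V ∧ V.eval 1 = 1 :=
  stmt_4_general β hβ
end

section
/- Let b be an odd positive integer, and for each odd β with 1 ≤ β ≤ b let W_{b,β}(X) = (1 - X²)^{(b-β)/2}·V_β(X), where V_β ∈ ℚ[X] is the odd polynomial of degree ≤ β with V_β(1) = 1 satisfying sin^β(z)·cot_β(z) = V_β(cos z). Then the polynomials W_{b,1}, W_{b,3}, ..., W_{b,b} are linearly independent over ℝ. -/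
open Real Polynomial

theorem stmt_6 (b : ℕ) (hb : Odd b) (V : ℕ → Polynomial ℚ)
    (hdeg : ∀ β, Odd β → β ≤ b → (V β).degree ≤ (β : ℕ))
    (hodd : ∀ β, Odd β → β ≤ b → (V β).comp (-Polynomial.X) = -(V β))
    (hone : ∀ β, Odd β → β ≤ b → (V β).eval 1 = 1)
    (heq : ∀ β, Odd β → β ≤ b → ∀ z : ℝ, Real.sin z ≠ 0 →
      Real.sin z ^ β * cotIter β z = Polynomial.aeval (Real.cos z) (V β)) :
    LinearIndependent ℝ
      (fun j : Fin ((b+1)/2) =>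
        ((1 - Polynomial.X^2) ^ ((b - (2*(j:ℕ)+1))/2) *
          (V (2*(j:ℕ)+1)).map (algebraMap ℚ ℝ) : Polynomial ℝ)) := by
  obtain ⟨k, hk⟩ := hb
  have hXne : (1 - Polynomial.X ^ 2 : Polynomial ℝ) ≠ 0 := by
    intro h
    have := congrArg (Polynomial.eval (0:ℝ)) h
    simp at this
  rw [Fintype.linearIndependent_iff]
  intro g hg
  suffices H : ∀ t : ℕ, ∀ j : Fin ((b+1)/2), k - (j:ℕ) = t → g j = 0 by
    intro j; exact H _ j rfl
  intro t
  induction t using Nat.strong_induction_on with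
  | _ t ih =>
  intro j hj
  have hjk : (j:ℕ) ≤ k := by have := j.isLt; omega
  have hzero : ∀ i : Fin ((b+1)/2), j < i → g i = 0 := by
    intro i hi
    have hik : (i:ℕ) ≤ k := by have := i.isLt; omega
    have hji : (j:ℕ) < (i:ℕ) := hi
    exact ih (k - (i:ℕ)) (by omega) i rfl
  have key : ∑ i ∈ Finset.univ.filter (fun i => i ≤ j),
      g i • ((1 - Polynomial.X ^ 2) ^ ((b - (2*(i:ℕ)+1))/2) *
        (V (2*(i:ℕ)+1)).map (algebraMap ℚ ℝ) : Polynomial ℝ) = 0 := by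
    rw [Finset.sum_filter_of_ne, hg]
    intro i _ hne
    by_contra h
    apply hne
    rw [hzero i (not_le.mp h)]
    simp
  have key2 : (∑ i ∈ Finset.univ.filter (fun i => i ≤ j),
      g i • ((1 - Polynomial.X ^ 2) ^ ((j:ℕ) - (i:ℕ)) *
        (V (2*(i:ℕ)+1)).map (algebraMap ℚ ℝ) : Polynomial ℝ)) *
      (1 - Polynomial.X ^ 2) ^ (k - (j:ℕ)) = 0 := by
    rw [Finset.sum_mul, ← key]
    apply Finset.sum_congr rfl
    intro i hi
    simp only [Finset.mem_filter] at hi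
    have hij : (i:ℕ) ≤ (j:ℕ) := hi.2
    have he : (b - (2*(i:ℕ)+1))/2 = ((j:ℕ) - (i:ℕ)) + (k - (j:ℕ)) := by omega
    rw [he, pow_add, smul_mul_assoc]
    ring_nf
  have hpow : ((1 - Polynomial.X ^ 2 : Polynomial ℝ)) ^ (k - (j:ℕ)) ≠ 0 :=
    pow_ne_zero _ hXne
  have key3 : ∑ i ∈ Finset.univ.filter (fun i => i ≤ j),
      g i • ((1 - Polynomial.X ^ 2) ^ ((j:ℕ) - (i:ℕ)) *
        (V (2*(i:ℕ)+1)).map (algebraMap ℚ ℝ) : Polynomial ℝ) = 0 :=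
    (mul_eq_zero.mp key2).resolve_right hpow
  have heval := congrArg (Polynomial.eval (1:ℝ)) key3
  rw [Polynomial.eval_finset_sum] at heval
  rw [Finset.sum_eq_single j] at heval
  · have hβodd : Odd (2*(j:ℕ)+1) := ⟨(j:ℕ), by ring⟩
    have hβle : 2*(j:ℕ)+1 ≤ b := by omega
    have h1 := hone _ hβodd hβle
    simp only [Nat.sub_self, pow_zero, one_mul, Polynomial.eval_smul,
      Polynomial.eval_map, smul_eq_mul, Polynomial.eval_zero] at heval
    rw [Polynomial.eval₂_at_one, h1] at heval
    simpa using heval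
  · intro i hi hne
    simp only [Finset.mem_filter] at hi
    have hlt : (i:ℕ) < (j:ℕ) := lt_of_le_of_ne hi.2 (fun h => hne (Fin.ext h))
    have hd : 0 < (j:ℕ) - (i:ℕ) := by omega
    simp only [Polynomial.eval_smul, Polynomial.eval_mul, Polynomial.eval_pow]
    have h0 : (1 - Polynomial.X ^ 2 : Polynomial ℝ).eval 1 = 0 := by simp
    rw [h0, zero_pow hd.ne', zero_mul, smul_zero]
  · intro h
    simp at h
end

section
/- Let E be a vector space over a field K, k, N ≥ 1, λ_{i,j} ∈ K for 1 ≤ i ≤ k, 1 ≤ j ≤ N, and ξ : {1,...,N+k-1} → E. Define v_j = (λ_{1,j}ξ(j), λ_{2,j}ξ(j+1), ..., λ_{k,j}ξ(j+k-1)) ∈ E^k for 1 ≤ j ≤ N. If the rank over K of (v_1,...,v_N) exceeds k(p-1), then there exist n_1,...,n_p ∈ {1,...,N+k-1} such that ξ(n_1),...,ξ(n_p) are K-linearly independent. -/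
/-- The linear equivalence between a `pi` submodule over `univ` and the product of the
submodules. -/
noncomputable def piSubmoduleEquiv (K : Type*) [Field K] {ι : Type*} {E : Type*}
    [AddCommGroup E] [Module K E] (W : ι → Submodule K E) :
    (Submodule.pi Set.univ W) ≃ₗ[K] (∀ i, W i) where
  toFun x i := ⟨x.1 i, x.2 i (Set.mem_univ i)⟩
  map_add' x y := rfl
  map_smul' c x := rfl
  invFun f := ⟨fun i => (f i : E), fun i _ => (f i).2⟩
  left_inv x := rfl
  right_inv f := rfl

theorem stmt_9 (K : Type*) [Field K] (E : Type*) [AddCommGroup E] [Module K E]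
    (k N p : ℕ) (hk : 1 ≤ k) (hN : 1 ≤ N)
    (lam : Fin k → Fin N → K) (ξ : ℕ → E)
    (v : Fin N → (Fin k → E))
    (hv : ∀ j i, v j i = lam i j • ξ ((j:ℕ) + 1 + (i:ℕ)))
    (hrank : k * (p - 1) < Module.finrank K (Submodule.span K (Set.range v))) :
    ∃ n : Fin p → ℕ, (∀ i, n i ∈ Finset.Icc 1 (N + k - 1)) ∧
      LinearIndependent K (fun i => ξ (n i)) := by
  classical
  set S : Finset ℕ := Finset.Icc 1 (N + k - 1) with hS
  set W : Submodule K E := Submodule.span K (ξ '' (S : Set ℕ)) with hW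
  have hWfin : (ξ '' (S : Set ℕ)).Finite := S.finite_toSet.image ξ
  haveI hWfd : FiniteDimensional K W := FiniteDimensional.span_of_finite K hWfin
  -- each v j lies in the pi submodule
  have hmem : ∀ j, v j ∈ Submodule.pi Set.univ (fun _ : Fin k => W) := by
    intro j i _
    rw [hv]
    refine Submodule.smul_mem _ _ (Submodule.subset_span ?_)
    refine ⟨(j : ℕ) + 1 + (i : ℕ), ?_, rfl⟩
    have hj := j.isLt
    have hi := i.isLt
    simp only [hS, Finset.coe_Icc, Set.mem_Icc]
    omega
  have hle : Submodule.span K (Set.range v) ≤ Submodule.pi Set.univ (fun _ : Fin k => W) := by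
    rw [Submodule.span_le]
    rintro _ ⟨j, rfl⟩
    exact hmem j
  -- dimension of the pi submodule
  haveI : FiniteDimensional K (Submodule.pi Set.univ (fun _ : Fin k => W)) :=
    LinearEquiv.finiteDimensional (piSubmoduleEquiv K (fun _ : Fin k => W)).symm
  have hdim : Module.finrank K (Submodule.pi Set.univ (fun _ : Fin k => W))
      = k * Module.finrank K W := by
    rw [LinearEquiv.finrank_eq (piSubmoduleEquiv K (fun _ : Fin k => W)),
      Module.finrank_pi_fintype, Finset.sum_const, Finset.card_univ, Fintype.card_fin,
      smul_eq_mul]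
  have hlt : k * (p - 1) < k * Module.finrank K W := by
    calc k * (p - 1) < Module.finrank K (Submodule.span K (Set.range v)) := hrank
    _ ≤ Module.finrank K (Submodule.pi Set.univ (fun _ : Fin k => W)) :=
        Submodule.finrank_mono hle
    _ = k * Module.finrank K W := hdim
  have hp : p ≤ Module.finrank K W := by
    have := Nat.lt_of_mul_lt_mul_left hlt
    omega
  -- extract a linearly independent family from the spanning set
  obtain ⟨t, hts, hspan, hind⟩ := exists_linearIndependent K (ξ '' (S : Set ℕ))
  have htfin : t.Finite := hWfin.subset hts
  haveI := htfin.fintype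
  have hcard : Module.finrank K (Submodule.span K t) = t.toFinset.card :=
    finrank_span_set_eq_card hind
  have hpt : p ≤ Fintype.card t := by
    rw [Set.toFinset_card] at hcard
    rw [← hcard, hspan, ← hW]
    exact hp
  obtain ⟨g⟩ := Function.Embedding.nonempty_of_card_le
    ((Fintype.card_fin p).symm ▸ hpt)
  -- choose preimages
  have hpre : ∀ x : t, ∃ m ∈ S, ξ m = (x : E) := by
    intro x
    obtain ⟨m, hm, hmx⟩ := hts x.2
    exact ⟨m, hm, hmx⟩
  choose f hfS hfξ using hpre
  refine ⟨fun i => f (g i), fun i => hfS _, ?_⟩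
  have : (fun i => ξ (f (g i))) = (fun x : t => (x : E)) ∘ g := by
    funext i
    simp [hfξ]
  rw [this]
  exact hind.comp g g.injective
end

section
/- Let a, b be odd positive integers and r ≥ 1 a real number with (9/2)·b·r·log(4r+3) ≤ a and b/(2(a+b)) ≤ 1/20. Let Q(X) = (X+2r+1)^b (X-1)^{a+b} - (X-2r-1)^b (X+1)^{a+b}. Then Q(2r+1+br/(a+b)) < 0. -/
/-!
Write `x = 2r + 1 + ε` with `ε = br/(a+b)`. Then `Q(x) < 0` says
`b · log((4r+2+ε)/ε) < (a+b) · log((2r+2+ε)/(2r+ε))`. The right side is at least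
`(a+b) · 2/(2r+2+ε) ≥ (a+b) · 20/(41r)`, because `ε ≤ r/10`. On the left,
`(4r+2+ε)/ε = A s + 1` with `A = (4r+2)/r` and `s = (a+b)/b ≥ (9/2) r log(4r+3) + 1`,
and `log(A s + 1)` grows more slowly in `s` than `20 s/(41r)`, so it suffices to compare them
at the smallest admissible `s`. There the comparison reduces to `log(9/2 L + 1) < 49/41 L`
for `L = log(4r+3) ≥ log 7`, which in turn comes down to `10^41 < 7^49`.
-/

open Real

namespace Real

lemma log_le_log_add_sub_div {y₀ y : ℝ} (hy₀ : 0 < y₀) (hy : 0 < y) :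
    log y ≤ log y₀ + (y - y₀) / y₀ := by
  have h := log_le_sub_one_of_pos (div_pos hy hy₀)
  rw [log_div hy.ne' hy₀.ne'] at h
  have : y / y₀ - 1 = (y - y₀) / y₀ := by field_simp
  linarith

lemma log_mul_add_one_lt_mul_of_le {A c s₀ s : ℝ} (hA : 0 < A) (hs₀ : 0 < s₀)
    (hc : 1 ≤ c * s₀) (hbase : log (A * s₀ + 1) < c * s₀) (hs : s₀ ≤ s) :
    log (A * s + 1) < c * s := by
  have hy₀ : 0 < A * s₀ + 1 := by positivity
  have hslope : (A * s + 1 - (A * s₀ + 1)) / (A * s₀ + 1) ≤ c * (s - s₀) := by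
    rw [div_le_iff₀ hy₀]
    nlinarith [mul_nonneg (sub_nonneg.2 hs) (sub_nonneg.2 hc)]
  linarith [log_le_log_add_sub_div hy₀ (by nlinarith : 0 < A * s + 1)]

lemma div_add_le_log_div {x d : ℝ} (hx : 0 < x) (hd : 0 ≤ d) :
    d / (x + d) ≤ log ((x + d) / x) := by
  have h := one_sub_inv_le_log_of_pos (show 0 < (x + d) / x by positivity)
  have : 1 - ((x + d) / x)⁻¹ = d / (x + d) := by field_simp; ring
  linarith

lemma one_le_log_seven : 1 ≤ log 7 := by
  rw [le_log_iff_exp_le (by norm_num)]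
  linarith [exp_one_lt_d9]

lemma log_seven_le_two : log 7 ≤ 2 := by
  rw [log_le_iff_le_exp (by norm_num), show (2 : ℝ) = 1 + 1 by norm_num, exp_add]
  nlinarith [exp_one_gt_d9]

lemma forty_one_mul_log_ten_lt : 41 * log 10 < 49 * log 7 := by
  have h : log ((10 : ℝ) ^ 41) < log ((7 : ℝ) ^ 49) := log_lt_log (by positivity) (by norm_num)
  simpa only [log_pow, Nat.cast_ofNat] using h

end Real

lemma log_nine_halves_mul_add_one_lt {L : ℝ} (hL : log 7 ≤ L) :
    log (9 / 2 * L + 1) < 49 / 41 * L := by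
  have h7 := one_le_log_seven
  refine log_mul_add_one_lt_mul_of_le (by norm_num) (by linarith) (by linarith) ?_ hL
  calc log (9 / 2 * log 7 + 1) ≤ log 10 :=
        log_le_log (by positivity) (by linarith [log_seven_le_two])
    _ < 49 / 41 * log 7 := by linarith [forty_one_mul_log_ten_lt]

lemma log_four_mul_add_two_div_mul_add_one_lt {r s : ℝ} (hr : 1 ≤ r)
    (hs : 9 / 2 * r * log (4 * r + 3) + 1 ≤ s) :
    log ((4 * r + 2) / r * s + 1) < 20 / (41 * r) * s := by
  set L := log (4 * r + 3)
  have hr0 : 0 < r := by linarith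
  have hL : log 7 ≤ L := log_le_log (by norm_num) (by linarith)
  have hL1 : 1 ≤ L := one_le_log_seven.trans hL
  have hs₀ : 20 / (41 * r) * (9 / 2 * r * L + 1) = 90 / 41 * L + 20 / (41 * r) := by
    field_simp; ring
  have harg : (4 * r + 2) / r * (9 / 2 * r * L + 1) + 1 ≤ (4 * r + 3) * (9 / 2 * L + 1) := by
    rw [div_mul_eq_mul_div, div_add' _ _ _ hr0.ne', div_le_iff₀ hr0]
    nlinarith
  have hc : 0 < 20 / (41 * r) := by positivity
  refine log_mul_add_one_lt_mul_of_le (by positivity) (by positivity) (by rw [hs₀]; linarith) ?_ hs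
  calc log ((4 * r + 2) / r * (9 / 2 * r * L + 1) + 1)
        ≤ log ((4 * r + 3) * (9 / 2 * L + 1)) := log_le_log (by positivity) harg
    _ = L + log (9 / 2 * L + 1) := log_mul (by linarith) (by linarith)
    _ < 90 / 41 * L := by linarith [log_nine_halves_mul_add_one_lt hL]
    _ < 20 / (41 * r) * (9 / 2 * r * L + 1) := by rw [hs₀]; linarith

lemma pow_mul_pow_lt_pow_mul_pow_of_mul_log_lt {p q u v : ℝ} (hp : 0 < p) (hq : 0 < q)
    (hu : 0 < u) (hv : 0 < v) (m n : ℕ) (h : m * log (p / u) < n * log (v / q)) :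
    p ^ m * q ^ n < u ^ m * v ^ n := by
  rw [← log_lt_log_iff (by positivity) (by positivity)]
  simp only [log_mul (pow_ne_zero _ hp.ne') (pow_ne_zero _ hq.ne'),
    log_mul (pow_ne_zero _ hu.ne') (pow_ne_zero _ hv.ne'), log_pow]
  rw [log_div hp.ne' hu.ne', log_div hv.ne' hq.ne'] at h
  linarith

lemma mul_log_lt_mul_log_of_le {b N r : ℝ} (hb : 0 < b) (hbN : 10 * b ≤ N) (hr : 1 ≤ r)
    (hs : 9 / 2 * r * log (4 * r + 3) + 1 ≤ N / b) :
    b * log ((4 * r + 2 + b * r / N) / (b * r / N)) <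
      N * log ((2 * r + b * r / N + 2) / (2 * r + b * r / N)) := by
  have hN : 0 < N := by linarith
  set ε := b * r / N
  have hε : ε ≤ r / 10 := by
    rw [div_le_iff₀ hN]
    nlinarith
  have hleft : (4 * r + 2 + ε) / ε = (4 * r + 2) / r * (N / b) + 1 := by
    simp only [ε]
    field_simp
  have hright : 20 / (41 * r) ≤ log ((2 * r + ε + 2) / (2 * r + ε)) := by
    refine le_trans ?_ (div_add_le_log_div (by positivity) zero_le_two)
    rw [div_le_div_iff₀ (by positivity) (by positivity)]
    linarith
  calc b * log ((4 * r + 2 + ε) / ε)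
      < b * (20 / (41 * r) * (N / b)) := by
        rw [hleft]
        exact mul_lt_mul_of_pos_left (log_four_mul_add_two_div_mul_add_one_lt hr hs) hb
    _ = N * (20 / (41 * r)) := by field_simp
    _ ≤ N * log ((2 * r + ε + 2) / (2 * r + ε)) := mul_le_mul_of_nonneg_left hright hN.le

theorem stmt_14_general (a b : ℕ) (hb0 : 0 < b)
    (r : ℝ) (hr : 1 ≤ r)
    (h1 : (9/2) * (b:ℝ) * r * Real.log (4*r+3) ≤ (a:ℝ))
    (h2 : (b:ℝ) / (2*((a:ℝ)+(b:ℝ))) ≤ 1/20) :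
    (2*r+1 + (b:ℝ)*r/((a:ℝ)+(b:ℝ)) + (2*r+1))^b *
        (2*r+1 + (b:ℝ)*r/((a:ℝ)+(b:ℝ)) - 1)^(a+b)
      - (2*r+1 + (b:ℝ)*r/((a:ℝ)+(b:ℝ)) - (2*r+1))^b *
        (2*r+1 + (b:ℝ)*r/((a:ℝ)+(b:ℝ)) + 1)^(a+b) < 0 := by
  have hb : (0 : ℝ) < b := by exact_mod_cast hb0
  have hbN : 10 * (b : ℝ) ≤ a + b := by
    rw [div_le_iff₀ (by positivity)] at h2
    linarith
  have hs : 9 / 2 * r * log (4 * r + 3) + 1 ≤ (a + b) / b := by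
    rw [le_div_iff₀ hb]
    linarith
  have hlog := mul_log_lt_mul_log_of_le hb hbN hr hs
  rw [← Nat.cast_add] at hlog
  rw [sub_neg]
  convert pow_mul_pow_lt_pow_mul_pow_of_mul_log_lt (by positivity) (by positivity) (by positivity)
    (by positivity) b (a + b) hlog using 3 <;> push_cast <;> ring

theorem stmt_14 (a b : ℕ) (ha : Odd a) (hb : Odd b) (ha0 : 0 < a) (hb0 : 0 < b)
    (r : ℝ) (hr : 1 ≤ r)
    (h1 : (9/2) * (b:ℝ) * r * Real.log (4*r+3) ≤ (a:ℝ))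
    (h2 : (b:ℝ) / (2*((a:ℝ)+(b:ℝ))) ≤ 1/20) :
    (2*r+1 + (b:ℝ)*r/((a:ℝ)+(b:ℝ)) + (2*r+1))^b *
        (2*r+1 + (b:ℝ)*r/((a:ℝ)+(b:ℝ)) - 1)^(a+b)
      - (2*r+1 + (b:ℝ)*r/((a:ℝ)+(b:ℝ)) - (2*r+1))^b *
        (2*r+1 + (b:ℝ)*r/((a:ℝ)+(b:ℝ)) + 1)^(a+b) < 0 :=
  stmt_14_general a b hb0 r hr h1 h2
end

section
/- For real r > 0, a, b odd positive integers with 2br < a, and positive integer n with rn ∈ ℤ, one has for every integer k > 2rn: (2n)!^{a-2br} · (k-2rn)_{2rn}^b · (k+2n+1)_{2rn}^b / (k+1)_{2n}^a < (2^{2b(r+1)} / r^{2(a-2br)})^n, where (α)_m = α(α+1)⋯(α+m-1) is the Pochhammer symbol. -/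
open Polynomial


lemma asc_prod (N : ℕ) (x : ℝ) :
    (ascPochhammer ℝ N).eval x = ∏ j ∈ Finset.range N, (x + j) := by
  induction N with
  | zero => simp
  | succ N ih => rw [ascPochhammer_succ_eval, ih, Finset.prod_range_succ]

lemma key_sq (L x : ℝ) (hx : 0 ≤ x) (hL : (0.6931471803:ℝ) ≤ L) :
    1 + x ≤ (1 + L * (1/2 + x) / 2)^2 := by
  have hL0 : (0:ℝ) ≤ L := by linarith
  have hLx : (0.6931471803:ℝ) * x ≤ L * x := mul_le_mul_of_nonneg_right hL hx
  have hL2 : (0.48:ℝ) ≤ L^2 := by nlinarith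
  have hL2x : (0.48:ℝ) * x ≤ L^2 * x := mul_le_mul_of_nonneg_right hL2 hx
  have hx2 : (0:ℝ) ≤ x^2 := sq_nonneg x
  have hL2x2 : (0.48:ℝ) * x^2 ≤ L^2 * x^2 := mul_le_mul_of_nonneg_right hL2 hx2
  nlinarith [sq_nonneg (x - 1)]

-- key analytic inequality: 1 + x ≤ 2^(1/2 + x)
lemma claimA (x : ℝ) (hx : 0 ≤ x) : 1 + x ≤ (2:ℝ) ^ ((1/2 : ℝ) + x) := by
  have hlog : (0.6931471803:ℝ) < Real.log 2 := Real.log_two_gt_d9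
  have h2 : (2:ℝ) ^ ((1/2 : ℝ) + x) = Real.exp (Real.log 2 * (1/2 + x)) := by
    rw [Real.rpow_def_of_pos (by norm_num)]
  set y : ℝ := Real.log 2 * (1/2 + x) with hy
  have hy0 : 0 ≤ y := by
    have : (0:ℝ) ≤ Real.log 2 := by linarith
    positivity
  have h1 : 1 + y/2 ≤ Real.exp (y/2) := by linarith [Real.add_one_le_exp (y/2)]
  have h1' : (0:ℝ) ≤ 1 + y/2 := by linarith
  have h3 : (1 + y/2)^2 ≤ Real.exp (y/2)^2 := by
    apply pow_le_pow_left₀ h1' h1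
  have h4 : Real.exp (y/2)^2 = Real.exp y := by
    rw [sq, ← Real.exp_add]; ring_nf
  rw [h2]
  rw [h4] at h3
  have key := key_sq (Real.log 2) x hx hlog.le
  calc 1 + x ≤ (1 + Real.log 2 * (1/2 + x) / 2)^2 := key
    _ = (1 + y/2)^2 := by rw [hy]
    _ ≤ Real.exp y := h3

theorem stmt_15 (a b : ℕ) (ha : Odd a) (hb : Odd b) (ha0 : 0 < a) (hb0 : 0 < b)
    (r : ℝ) (hr : 0 < r) (hbra : 2 * (b:ℝ) * r < (a:ℝ))
    (n : ℕ) (hn : 1 ≤ n) (m : ℕ) (hm : (m:ℝ) = r * n)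
    (k : ℤ) (hk : 2 * r * n < (k:ℝ)) :
    ((2*n).factorial : ℝ) ^ ((a:ℝ) - 2*(b:ℝ)*r) *
        ((ascPochhammer ℝ (2*m)).eval ((k:ℝ) - 2*(m:ℝ)))^b *
        ((ascPochhammer ℝ (2*m)).eval ((k:ℝ) + 2*(n:ℝ) + 1))^b /
        ((ascPochhammer ℝ (2*n)).eval ((k:ℝ) + 1))^a <
      (2 ^ (2*(b:ℝ)*(r+1)) / r ^ (2*((a:ℝ) - 2*(b:ℝ)*r))) ^ n := by
  have hn' : (0:ℝ) < n := by exact_mod_cast hn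
  have hmR : (0:ℝ) < m := by rw [hm]; positivity
  have hm0 : 0 < m := by exact_mod_cast hmR
  set K : ℝ := (k:ℝ) with hKdef
  have hK0 : (0:ℝ) < K := lt_trans (by positivity) hk
  have hKm : 2*(m:ℝ) < K := by rw [hm]; linarith
  set c : ℝ := (a:ℝ) - 2*(b:ℝ)*r with hc
  have hc0 : 0 < c := by rw [hc]; linarith
  -- product forms
  rw [asc_prod, asc_prod, asc_prod]
  set P : ℝ := ∏ j ∈ Finset.range (2*m), (K - 2*(m:ℝ) + j) with hP
  set Q : ℝ := ∏ j ∈ Finset.range (2*m), (K + 2*(n:ℝ) + 1 + j) with hQ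
  set R : ℝ := ∏ j ∈ Finset.range (2*n), (K + 1 + j) with hR
  have hPpos : 0 < P := by
    apply Finset.prod_pos
    intro j hj
    have : (0:ℝ) ≤ j := Nat.cast_nonneg j
    linarith
  have hQpos : 0 < Q := by
    apply Finset.prod_pos
    intro j hj
    have : (0:ℝ) ≤ j := Nat.cast_nonneg j
    linarith
  -- PQ ≤ (K+n)^(4m)
  have hPQ : P * Q ≤ (K + n)^(4*m) := by
    have hQ' : Q = ∏ j ∈ Finset.range (2*m), (K + 2*(n:ℝ) + 1 + ((2*m - 1 - j : ℕ):ℝ)) := by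
      rw [hQ, ← Finset.prod_range_reflect (fun j => K + 2*(n:ℝ) + 1 + (j:ℝ)) (2*m)]
    rw [hQ', ← Finset.prod_mul_distrib]
    have h4 : (K + n)^(4*m) = ∏ _j ∈ Finset.range (2*m), (K + (n:ℝ))^2 := by
      rw [Finset.prod_const, Finset.card_range, ← pow_mul]
      ring_nf
    rw [h4]
    apply Finset.prod_le_prod
    · intro j hj
      have hj' : (j:ℝ) ≥ 0 := Nat.cast_nonneg j
      have h1 : 0 ≤ K - 2*(m:ℝ) + j := by linarith
      have h2 : (0:ℝ) ≤ K + 2*(n:ℝ) + 1 + ((2*m - 1 - j : ℕ):ℝ) := by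
        have := (Nat.cast_nonneg (2*m - 1 - j) : (0:ℝ) ≤ _)
        linarith
      exact mul_nonneg h1 h2
    · intro j hj
      rw [Finset.mem_range] at hj
      have hcast : ((2*m - 1 - j : ℕ):ℝ) = 2*(m:ℝ) - 1 - j := by
        have h1 : j ≤ 2*m - 1 := by omega
        have h2 : 1 ≤ 2*m := by omega
        push_cast [Nat.cast_sub h1, Nat.cast_sub h2]
        ring
      rw [hcast]
      nlinarith [sq_nonneg ((K - 2*(m:ℝ) + j) - (K + n))]
    -- R lower bound
  have hRlb : K^(2*n) < R := by
    have h1 : K^(2*n) < (K+1)^(2*n) := pow_lt_pow_left₀ (by linarith) hK0.le (by omega)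
    have h2 : (K+1)^(2*n) ≤ R := by
      rw [hR]
      calc (K+1)^(2*n) = ∏ _j ∈ Finset.range (2*n), (K+1) := by
            rw [Finset.prod_const, Finset.card_range]
        _ ≤ _ := Finset.prod_le_prod (fun j _ => by positivity) (fun j _ => by
            have : (0:ℝ) ≤ j := Nat.cast_nonneg j
            linarith)
    linarith
  have hRa : K^(2*n*a) < R^a := by
    rw [pow_mul]
    exact pow_lt_pow_left₀ hRlb (by positivity) (by omega)
  set F : ℝ := ((2*n).factorial : ℝ) ^ c with hFdef
  have hFpos : 0 < F := Real.rpow_pos_of_pos (by positivity) c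
  have hNpos : 0 < F * P^b * Q^b := by positivity
  have step1 : F * P^b * Q^b / R^a < F * P^b * Q^b / K^(2*n*a) :=
    div_lt_div_of_pos_left hNpos (by positivity) hRa
  -- exponent bookkeeping
  have hsplit : (K:ℝ) ^ (2*n*a) = K ^ (2*c*(n:ℝ)) * K ^ (4*m*b) := by
    rw [← Real.rpow_natCast K (2*n*a), ← Real.rpow_natCast K (4*m*b), ← Real.rpow_add hK0]
    congr 1
    push_cast
    rw [hc, hm]
    ring
  have hFle : F ≤ ((2*n : ℕ):ℝ) ^ (2*c*(n:ℝ)) := by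
    have h1 : ((2*n).factorial : ℝ) ≤ ((2*n : ℕ):ℝ)^(2*n) := by
      exact_mod_cast Nat.factorial_le_pow (2*n)
    calc F ≤ (((2*n : ℕ):ℝ)^(2*n)) ^ c := Real.rpow_le_rpow (by positivity) h1 hc0.le
      _ = _ := by
        rw [← Real.rpow_natCast ((2*n:ℕ):ℝ) (2*n), ← Real.rpow_mul (by positivity)]
        congr 1
        push_cast
        ring
  have hA : ((2*n:ℕ):ℝ) ^ (2*c*(n:ℝ)) / K ^ (2*c*(n:ℝ)) ≤ 1 / r ^ (2*c*(n:ℝ)) := by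
    have hdiv : ((2*n:ℕ):ℝ) / K ≤ 1 / r := by
      rw [div_le_div_iff₀ hK0 hr]
      push_cast
      nlinarith
    calc ((2*n:ℕ):ℝ) ^ (2*c*(n:ℝ)) / K ^ (2*c*(n:ℝ))
        = (((2*n:ℕ):ℝ)/K) ^ (2*c*(n:ℝ)) := (Real.div_rpow (by positivity) hK0.le _).symm
      _ ≤ (1/r) ^ (2*c*(n:ℝ)) := Real.rpow_le_rpow (by positivity) hdiv (by positivity)
      _ = 1 / r ^ (2*c*(n:ℝ)) := by
          rw [Real.div_rpow (by norm_num) hr.le, Real.one_rpow]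
  -- bound on (K+n)
  set x : ℝ := (n:ℝ)/(2*(m:ℝ)) with hxdef
  have hx0 : 0 < x := by positivity
  have hKn : K + n ≤ (2:ℝ)^((1/2:ℝ) + x) * K := by
    have h1 : (n:ℝ)/K ≤ x := by
      rw [hxdef]
      exact div_le_div_of_nonneg_left (by positivity) (by positivity) hKm.le
    have h2 := claimA x hx0.le
    have h3 : 1 + (n:ℝ)/K ≤ (2:ℝ)^((1/2:ℝ)+x) := le_trans (by linarith) h2
    calc K + (n:ℝ) = (1 + (n:ℝ)/K) * K := by field_simp
      _ ≤ _ := mul_le_mul_of_nonneg_right h3 hK0.le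
  have hB : (K+(n:ℝ))^(4*m*b) ≤ (2:ℝ)^(2*b*(m+n)) * K^(4*m*b) := by
    calc (K+(n:ℝ))^(4*m*b) ≤ ((2:ℝ)^((1/2:ℝ)+x) * K)^(4*m*b) :=
          pow_le_pow_left₀ (by positivity) hKn _
      _ = ((2:ℝ)^((1/2:ℝ)+x))^(4*m*b) * K^(4*m*b) := mul_pow _ _ _
      _ = (2:ℝ)^(2*b*(m+n)) * K^(4*m*b) := by
          congr 1
          rw [← Real.rpow_natCast ((2:ℝ)^((1/2:ℝ)+x)) (4*m*b),
              ← Real.rpow_mul (by norm_num), ← Real.rpow_natCast (2:ℝ) (2*b*(m+n))]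
          congr 1
          rw [hxdef]
          push_cast
          field_simp
          ring
  -- RHS expansion
  have hRHS : ((2:ℝ) ^ (2*(b:ℝ)*(r+1)) / r ^ (2*c)) ^ n
      = (2:ℝ)^(2*b*(m+n)) * (1 / r ^ (2*c*(n:ℝ))) := by
    rw [div_pow]
    rw [← Real.rpow_natCast ((2:ℝ)^(2*(b:ℝ)*(r+1))) n, ← Real.rpow_mul (by norm_num)]
    rw [← Real.rpow_natCast (r^(2*c)) n, ← Real.rpow_mul hr.le]
    rw [← Real.rpow_natCast (2:ℝ) (2*b*(m+n))]
    rw [mul_one_div]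
    congr 2
    · push_cast
      rw [hm]
      ring
  -- assemble
  calc F * P^b * Q^b / R^a
      < F * P^b * Q^b / K^(2*n*a) := step1
    _ ≤ (((2*n:ℕ):ℝ)^(2*c*(n:ℝ)) * (K+(n:ℝ))^(4*m*b)) / (K^(2*c*(n:ℝ)) * K^(4*m*b)) := by
        rw [hsplit]
        gcongr ?_ / _
        have hPQb : P^b * Q^b ≤ ((K+(n:ℝ))^(4*m))^b := by
          rw [← mul_pow]
          exact pow_le_pow_left₀ (by positivity) hPQ b
        calc F * P^b * Q^b ≤ F * ((K+(n:ℝ))^(4*m))^b := by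
              rw [mul_assoc]
              exact mul_le_mul_of_nonneg_left hPQb hFpos.le
          _ ≤ ((2*n:ℕ):ℝ)^(2*c*(n:ℝ)) * (K+(n:ℝ))^(4*m*b) := by
              rw [← pow_mul]
              exact mul_le_mul_of_nonneg_right hFle (by positivity)
    _ = (((2*n:ℕ):ℝ)^(2*c*(n:ℝ)) / K^(2*c*(n:ℝ))) * ((K+(n:ℝ))^(4*m*b) / K^(4*m*b)) := by
        ring
    _ ≤ (1 / r^(2*c*(n:ℝ))) * (2:ℝ)^(2*b*(m+n)) := by
        apply mul_le_mul hA ?_ (by positivity) (by positivity)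
        rw [div_le_iff₀ (by positivity)]
        calc (K+(n:ℝ))^(4*m*b) ≤ (2:ℝ)^(2*b*(m+n)) * K^(4*m*b) := hB
          _ = _ := by ring
    _ = ((2:ℝ) ^ (2*(b:ℝ)*(r+1)) / r ^ (2*c)) ^ n := by
        rw [hRHS]
        ring
end

section
/- Let 0 < ε ≤ 1/20, ε' = ε - ε/(3log(1/ε)), C = ε'^{-12/ε'}, M = ⌊(1-ε')·log(C)/(1+log 2)⌋, D = (2e)^{(1+ε)M}, and η = ε^{15/ε}. Then C + 1 ≤ D < η^{-1}. -/
/-!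
Compare everything on a logarithmic scale, with ℓ = log(1/ε), ℓ' = log(1/ε') and
Λ = log C = 12ℓ'/ε'. Up to the rounding loss (1 + ε)(1 + log 2) < 1.78, log D equals
(1 + ε)(1 - ε')Λ = Λ + (ε - ε')Λ - εε'Λ. The gap ε - ε' = ε/(3ℓ) is chosen so that
(ε - ε')Λ ≥ 4, while εε'Λ = 12εℓ' < 1.9 because ε log(1/ε) ≤ (log 20)/20; hence log D exceeds
log C by more than 1/10, and C + 1 ≤ D. In the other direction ε/ε' ≤ 1.137 gives
εΛ ≤ 13.7(ℓ + 0.137), which stays below 15ℓ = ε log(1/η) as ℓ ≥ log 20.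
-/

open Real

lemma log_sixteen_gt : 2.772 < log 16 := by
  have h : log 16 = 4 * log 2 := by
    rw [show (16 : ℝ) = 2 ^ 4 by norm_num, log_pow]; norm_num
  linarith [log_two_gt_d9]

lemma log_twenty_le_three : log 20 ≤ 3 := by
  rw [log_le_iff_le_exp (by norm_num)]
  calc (20 : ℝ) ≤ 2.7182818283 ^ 3 := by norm_num
    _ ≤ exp 1 ^ 3 := by gcongr; exact exp_one_gt_d9.le
    _ = exp 3 := by rw [← exp_nat_mul]; norm_num

lemma log_one_div_le_add_of_le_mul {x y c : ℝ} (hx : 0 < x) (hy : 0 < y) (h : y ≤ c * x) :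
    log (1 / x) ≤ log (1 / y) + (c - 1) := by
  have hlog := log_le_sub_one_of_pos (div_pos hy hx)
  rw [log_div hy.ne' hx.ne'] at hlog
  have hc : y / x ≤ c := (div_le_iff₀ hx).2 h
  simp only [one_div, log_inv]
  linarith

lemma add_one_le_of_log_add_inv_le {x y : ℝ} (hx : 0 < x) (hy : 0 < y)
    (h : log x + 1 / x ≤ log y) : x + 1 ≤ y := by
  have hx1 : 0 < x + 1 := by linarith
  have hstep := log_one_div_le_add_of_le_mul hx hx1 (c := 1 + 1 / x)
    (by rw [add_mul, one_mul, one_div_mul_cancel hx.ne'])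
  simp only [one_div, log_inv] at hstep h
  rw [← log_le_log_iff hx1 hy]
  linarith

lemma mul_log_rpow_neg_div {x : ℝ} (hx : 0 < x) (a : ℝ) :
    x * log (x ^ (-(a / x))) = a * log (1 / x) := by
  rw [log_rpow hx, one_div, log_inv]
  field_simp

section
variable {ε : ℝ}

lemma lt_log_one_div (h0 : 0 < ε) (h1 : ε ≤ 1 / 20) : 2.772 < log (1 / ε) :=
  log_sixteen_gt.trans_le <| log_le_log (by norm_num) <| by
    rw [le_div_iff₀ h0]; linarith

lemma mul_log_one_div_le (h0 : 0 < ε) (h1 : ε ≤ 1 / 20) : ε * log (1 / ε) ≤ 3 / 20 := by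
  have hmem : ∀ x : ℝ, 0 ≤ x → x ≤ 1 / 20 → x ∈ Set.Icc 0 (exp (-1)) := fun x hx hx' =>
    ⟨hx, hx'.trans (by linarith [exp_neg_one_gt_d9])⟩
  have h := mul_log_strictAntiOn.antitoneOn (hmem ε h0.le h1) (hmem _ (by norm_num) le_rfl) h1
  rw [one_div, log_inv] at h ⊢
  linarith [log_twenty_le_three]

end

section
variable {ε ε' ℓ ℓ' Λ : ℝ}

lemma le_of_sub_eq_div (h0 : 0 < ε) (hℓ : 0 < ℓ) (hgap : ε - ε' = ε / (3 * ℓ)) : ε' ≤ ε := by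
  linarith [show 0 ≤ ε / (3 * ℓ) by positivity]

lemma le_mul_of_sub_eq_div (h0 : 0 < ε) (hℓ : 2.772 < ℓ) (hgap : ε - ε' = ε / (3 * ℓ)) :
    ε ≤ 1.137 * ε' := by
  have : ε / (3 * ℓ) ≤ 0.1203 * ε := by
    rw [div_le_iff₀ (by positivity)]; nlinarith
  linarith

lemma four_le_sub_mul (h0 : 0 < ε) (hℓ : 0 < ℓ) (hgap : ε - ε' = ε / (3 * ℓ))
    (hε' : 0 < ε') (hℓ' : ℓ ≤ ℓ') (hΛ : ε' * Λ = 12 * ℓ') : 4 ≤ (ε - ε') * Λ := by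
  have hΛ0 : 0 ≤ Λ := by nlinarith
  have hεΛ : 12 * ℓ ≤ ε * Λ := by
    nlinarith [mul_le_mul_of_nonneg_right (le_of_sub_eq_div h0 hℓ hgap) hΛ0]
  rw [hgap, div_mul_eq_mul_div, le_div_iff₀ (by positivity)]
  linarith

lemma add_le_one_add_mul_sub (h0 : 0 < ε) (h1 : ε ≤ 1 / 20) (hℓ : 0 < ℓ)
    (hεℓ : ε * ℓ ≤ 3 / 20) (hgap : ε - ε' = ε / (3 * ℓ)) (hε' : 0 < ε') (hℓ' : ℓ ≤ ℓ')
    (hℓ'' : ℓ' ≤ ℓ + 0.137) (hΛ : ε' * Λ = 12 * ℓ') :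
    Λ + 1 / 10 ≤ (1 + ε) * ((1 - ε') * Λ - (1 + log 2)) := by
  have h4 := four_le_sub_mul h0 hℓ hgap hε' hℓ' hΛ
  have hεε' : ε * ε' * Λ ≤ 1.8822 := by rw [mul_assoc, hΛ]; nlinarith
  have hlog2 : (1 + ε) * (1 + log 2) ≤ 1.778 := by nlinarith [log_two_lt_d9, log_two_gt_d9]
  linarith

lemma one_add_mul_one_sub_mul_lt (h0 : 0 < ε) (h1 : ε ≤ 1 / 20) (hℓ : 2.772 < ℓ)
    (hgap : ε - ε' = ε / (3 * ℓ)) (hratio : ε ≤ 1.137 * ε') (hℓ' : ℓ ≤ ℓ')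
    (hℓ'' : ℓ' ≤ ℓ + 0.137) (hΛ : ε' * Λ = 12 * ℓ') :
    (1 + ε) * ((1 - ε') * Λ) < 15 / ε * ℓ := by
  have hε' : 0 < ε' := by linarith
  have hΛ0 : 0 ≤ Λ := by nlinarith
  have hεΛ : ε * Λ ≤ 13.644 * (ℓ + 0.137) := by nlinarith
  have hgap' : ε - ε' ≤ 0.0061 := by
    rw [hgap, div_le_iff₀ (by positivity)]; nlinarith
  have hcoef : (1 + ε) * (1 - ε') ≤ 1.0061 := by nlinarith
  have := mul_le_mul_of_nonneg_right hcoef (mul_nonneg h0.le hΛ0)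
  rw [div_mul_eq_mul_div, lt_div_iff₀ h0]
  nlinarith

end

theorem stmt_18 (ε : ℝ) (h0 : 0 < ε) (h1 : ε ≤ 1/20)
    (ε' C η D : ℝ) (M : ℤ)
    (hε' : ε' = ε - ε/(3*Real.log (1/ε)))
    (hC : C = ε' ^ (-(12/ε')))
    (hM : M = ⌊(1-ε') * Real.log C / (1 + Real.log 2)⌋)
    (hD : D = (2*Real.exp 1) ^ ((1+ε) * (M:ℝ)))
    (hη : η = ε ^ (15/ε)) :
    C + 1 ≤ D ∧ D < η⁻¹ := by
  have hℓ := lt_log_one_div h0 h1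
  have hgap : ε - ε' = ε / (3 * log (1 / ε)) := by rw [hε']; ring
  have hratio := le_mul_of_sub_eq_div h0 hℓ hgap
  have hε'0 : 0 < ε' := by linarith
  have hε'ε := le_of_sub_eq_div h0 (by linarith) hgap
  have hℓ' : log (1 / ε) ≤ log (1 / ε') :=
    log_le_log (by positivity) (one_div_le_one_div_of_le hε'0 hε'ε)
  have hℓ'' : log (1 / ε') ≤ log (1 / ε) + 0.137 := by
    linarith [log_one_div_le_add_of_le_mul hε'0 h0 hratio]
  have hΛ : ε' * log C = 12 * log (1 / ε') := hC ▸ mul_log_rpow_neg_div hε'0 12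
  have hC0 : 0 < C := hC ▸ rpow_pos_of_pos hε'0 _
  have hD0 : 0 < D := hD ▸ rpow_pos_of_pos (by positivity) _
  have hlogD : log D = (1 + ε) * (M * (1 + log 2)) := by
    rw [hD, log_rpow (by positivity), log_mul two_ne_zero (exp_ne_zero 1), log_exp]; ring
  have hc : (0 : ℝ) < 1 + log 2 := by positivity
  constructor
  · have hC10 : 10 ≤ C := by
      have : 9 ≤ log C := by nlinarith
      linarith [exp_log hC0 ▸ add_one_le_exp (log C)]
    refine add_one_le_of_log_add_inv_le hC0 hD0 ?_
    have hM' := hM ▸ Int.sub_floor_div_mul_lt ((1 - ε') * log C) hc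
    calc log C + 1 / C ≤ log C + 1 / 10 := by gcongr
      _ ≤ (1 + ε) * ((1 - ε') * log C - (1 + log 2)) :=
        add_le_one_add_mul_sub h0 h1 (by linarith) (mul_log_one_div_le h0 h1) hgap hε'0 hℓ' hℓ'' hΛ
      _ ≤ log D := by rw [hlogD]; gcongr; linarith
  · have hlogη : log η⁻¹ = 15 / ε * log (1 / ε) := by
      rw [hη, log_inv, log_rpow h0, one_div, log_inv]; ring
    rw [← log_lt_log_iff hD0 (inv_pos.2 (hη ▸ rpow_pos_of_pos h0 _)), hlogD, hlogη]
    have hM' := hM ▸ Int.sub_floor_div_mul_nonneg ((1 - ε') * log C) hc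
    calc (1 + ε) * (M * (1 + log 2)) ≤ (1 + ε) * ((1 - ε') * log C) :=
        mul_le_mul_of_nonneg_left (by linarith) (by linarith)
      _ < 15 / ε * log (1 / ε) := one_add_mul_one_sub_mul_lt h0 h1 hℓ hgap hratio hℓ' hℓ'' hΛ
end
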